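/- Let H be a Hilbert space, P : ℝ → (H →L[ℝ] H), t₀ ∈ ℝ, and constants c > 0. Assume: (i) ‖P t - P t₀‖ ≤ c·|t - t₀| for all t; (ii) there is η : ℝ → ℝ with η s → ∞ as s → 0⁺ such that for all t ≠ t₀ and all v ⊥ ker (P t), |t - t₀| · η(|t - t₀|) · ‖v‖ ≤ ‖P t v‖. Let f₀ ∈ ker (P t₀), u : ℝ → H with ‖u t - f₀‖ ≤ c·|t - t₀|, and suppose u t = v t + ψ t with ψ t ∈ ker (P t) and v t ⊥ ker (P t). Then ‖v t‖ → 0 and ‖f₀ - ψ t‖ → 0 as t → t₀. -/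

import Mathlib

/-!
Since `ψ t ∈ ker (P t)`, `P t (v t) = P t (u t)`, and this is `O(|t - t₀|)` because `u t` lies
within `c |t - t₀|` of the vector `f₀ ∈ ker (P t₀)` and `P t` within `c |t - t₀|` of `P t₀`.
Dividing the lower bound (ii) by `|t - t₀|` leaves `η (|t - t₀|) ‖v t‖ = O(1)`, so `v t → 0`,
and then `ψ = u - v → f₀`.
-/

open Filter Topology

theorem tendsto_of_norm_sub_le_mul_abs {E : Type*} [SeminormedAddCommGroup E]
    {u : ℝ → E} {f₀ : E} {t₀ c : ℝ} (hu : ∀ t, ‖u t - f₀‖ ≤ c * |t - t₀|) :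
    Tendsto u (𝓝 t₀) (𝓝 f₀) := by
  have hlin : Tendsto (fun t ↦ c * |t - t₀|) (𝓝 t₀) (𝓝 0) :=
    (continuous_const.mul (continuous_id.sub continuous_const).abs).tendsto' t₀ 0 (by simp)
  exact tendsto_iff_norm_sub_tendsto_zero.2 (squeeze_zero (fun _ ↦ norm_nonneg _) hu hlin)

theorem ContinuousLinearMap.norm_apply_le_of_norm_sub_le_of_apply_eq_zero {𝕜 E F : Type*}
    [NontriviallyNormedField 𝕜] [SeminormedAddCommGroup E] [SeminormedAddCommGroup F]
    [NormedSpace 𝕜 E] [NormedSpace 𝕜 F] {A B : E →L[𝕜] F} {x f₀ : E} {δ : ℝ}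
    (hAB : ‖A - B‖ ≤ δ) (hx : ‖x - f₀‖ ≤ δ) (hf₀ : B f₀ = 0) : ‖A x‖ ≤ δ * (‖x‖ + ‖B‖) :=
  calc ‖A x‖ = ‖(A - B) x + B (x - f₀)‖ := by simp [hf₀]
    _ ≤ ‖A - B‖ * ‖x‖ + ‖B‖ * ‖x - f₀‖ :=
      norm_add_le_of_le (le_opNorm _ _) (le_opNorm _ _)
    _ ≤ δ * ‖x‖ + ‖B‖ * δ := by gcongr
    _ = δ * (‖x‖ + ‖B‖) := by ring

theorem tendsto_zero_of_mul_le {α : Type*} {l : Filter α} {f g η : α → ℝ} {b : ℝ}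
    (hη : Tendsto η l atTop) (hg : Tendsto g l (𝓝 b)) (hf : ∀ x, 0 ≤ f x)
    (hfg : ∀ᶠ x in l, η x * f x ≤ g x) : Tendsto f l (𝓝 0) := by
  refine squeeze_zero' (.of_forall hf) ?_ (hg.div_atTop hη)
  filter_upwards [hfg, hη.eventually_gt_atTop 0] with x hx hηx
  rwa [le_div_iff₀' hηx]

theorem stmt_6_general {H : Type*} [NormedAddCommGroup H] [InnerProductSpace ℝ H]
    (P : ℝ → H →L[ℝ] H) (t₀ : ℝ) (c : ℝ)
    (hlip : ∀ t, ‖P t - P t₀‖ ≤ c * |t - t₀|)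
    (η : ℝ → ℝ) (hη : Filter.Tendsto η (nhdsWithin 0 (Set.Ioi 0)) Filter.atTop)
    (hgap : ∀ t, t ≠ t₀ → ∀ v ∈ (LinearMap.ker (P t : H →ₗ[ℝ] H))ᗮ,
      |t - t₀| * η |t - t₀| * ‖v‖ ≤ ‖P t v‖)
    (f₀ : H) (hf₀ : f₀ ∈ LinearMap.ker (P t₀ : H →ₗ[ℝ] H))
    (u v ψ : ℝ → H) (hu : ∀ t, ‖u t - f₀‖ ≤ c * |t - t₀|)
    (hdecomp : ∀ t, u t = v t + ψ t)
    (hψ : ∀ t, ψ t ∈ LinearMap.ker (P t : H →ₗ[ℝ] H))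
    (hv : ∀ t, v t ∈ (LinearMap.ker (P t : H →ₗ[ℝ] H))ᗮ) :
    Filter.Tendsto (fun t => ‖v t‖) (nhds t₀) (nhds 0) ∧
      Filter.Tendsto (fun t => ‖f₀ - ψ t‖) (nhds t₀) (nhds 0) := by
  have hu_lim := tendsto_of_norm_sub_le_mul_abs hu
  have hv_bound : ∀ t ≠ t₀, η |t - t₀| * ‖v t‖ ≤ c * (‖u t‖ + ‖P t₀‖) := by
    intro t ht
    have hPψ : P t (ψ t) = 0 := hψ t
    have hPv : P t (v t) = P t (u t) := by simp [hdecomp t, hPψ]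
    have hPu := (P t).norm_apply_le_of_norm_sub_le_of_apply_eq_zero (hlip t) (hu t) hf₀
    refine le_of_mul_le_mul_left ?_ (abs_pos.2 (sub_ne_zero.2 ht))
    linarith [hgap t ht _ (hv t), hPv ▸ hPu]
  have hv_ne : Tendsto (fun t ↦ ‖v t‖) (𝓝[≠] t₀) (𝓝 0) := by
    refine tendsto_zero_of_mul_le (hη.comp ?_)
      (((hu_lim.norm.add_const _).const_mul c).mono_left nhdsWithin_le_nhds)
      (fun _ ↦ norm_nonneg _) (eventually_nhdsWithin_of_forall hv_bound)
    simpa only [Real.norm_eq_abs] using tendsto_norm_sub_self_nhdsNE t₀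
  have hv_t₀ : v t₀ = 0 := by
    have hu_t₀ : u t₀ = f₀ := by simpa [sub_eq_zero] using hu t₀
    refine Submodule.disjoint_def.1 (Submodule.orthogonal_disjoint _) _ ?_ (hv t₀)
    simpa [eq_sub_of_add_eq (hdecomp t₀).symm, hu_t₀] using Submodule.sub_mem _ hf₀ (hψ t₀)
  have hv_lim : Tendsto (fun t ↦ ‖v t‖) (𝓝 t₀) (𝓝 0) := by
    have hv_cont : ContinuousWithinAt (fun t ↦ ‖v t‖) {t₀}ᶜ t₀ := by
      simpa [ContinuousWithinAt, hv_t₀] using hv_ne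
    simpa [hv_t₀] using (continuousWithinAt_compl_self.1 hv_cont).tendsto
  refine ⟨hv_lim, ?_⟩
  have hψ_lim : Tendsto ψ (𝓝 t₀) (𝓝 f₀) := by
    simpa using (hu_lim.sub (tendsto_zero_iff_norm_tendsto_zero.2 hv_lim)).congr
      fun t ↦ (eq_sub_of_add_eq' (hdecomp t).symm).symm
  simpa only [norm_sub_rev f₀] using tendsto_iff_norm_sub_tendsto_zero.1 hψ_lim

theorem stmt_6 {H : Type*} [NormedAddCommGroup H] [InnerProductSpace ℝ H]
    [CompleteSpace H]
    (P : ℝ → H →L[ℝ] H) (t₀ : ℝ) (c : ℝ) (hc : 0 < c)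
    (hlip : ∀ t, ‖P t - P t₀‖ ≤ c * |t - t₀|)
    (η : ℝ → ℝ) (hη : Filter.Tendsto η (nhdsWithin 0 (Set.Ioi 0)) Filter.atTop)
    (hgap : ∀ t, t ≠ t₀ → ∀ v ∈ (LinearMap.ker (P t : H →ₗ[ℝ] H))ᗮ,
      |t - t₀| * η |t - t₀| * ‖v‖ ≤ ‖P t v‖)
    (f₀ : H) (hf₀ : f₀ ∈ LinearMap.ker (P t₀ : H →ₗ[ℝ] H))
    (u v ψ : ℝ → H) (hu : ∀ t, ‖u t - f₀‖ ≤ c * |t - t₀|)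
    (hdecomp : ∀ t, u t = v t + ψ t)
    (hψ : ∀ t, ψ t ∈ LinearMap.ker (P t : H →ₗ[ℝ] H))
    (hv : ∀ t, v t ∈ (LinearMap.ker (P t : H →ₗ[ℝ] H))ᗮ) :
    Filter.Tendsto (fun t => ‖v t‖) (nhds t₀) (nhds 0) ∧
      Filter.Tendsto (fun t => ‖f₀ - ψ t‖) (nhds t₀) (nhds 0) :=
  stmt_6_general P t₀ c hlip η hη hgap f₀ hf₀ u v ψ hu hdecomp hψ hv
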